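/- arXiv:1612.06914 — 2 statements merged into one kernel-verified Lean document; each statement's English description precedes it below -/
import Mathlib

section
/- For any ε > 0 there exists δ > 0 such that: if (e_1,…,e_d) are vectors in ℝ^{2d}, each e_i being δ-close to the standard basis vector E_i, and the e_i span a Lagrangian subspace, then there exists a symplectic matrix A ∈ Sp(2d,ℝ) with ‖A − Id‖ < ε and A(e_i) = E_i for i = 1,…,d. -/
open Matrix

/-- The standard symplectic matrix `J = [[0, I],[-I, 0]]`. -/
noncomputable def Jmat (d : ℕ) : Matrix (Fin d ⊕ Fin d) (Fin d ⊕ Fin d) ℝ :=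
  Matrix.fromBlocks 0 1 (-1) 0

/-- `M ∈ Sp(2d, ℝ)`: `Mᵀ J M = J`. -/
def IsSymplectic {d : ℕ} (M : Matrix (Fin d ⊕ Fin d) (Fin d ⊕ Fin d) ℝ) : Prop :=
  Mᵀ * Jmat d * M = Jmat d

/-- The standard symplectic form `ω(u,v) = uᵀ J v` on `ℝ^{2d}`. -/
noncomputable def omegaForm {d : ℕ} (u v : Fin d ⊕ Fin d → ℝ) : ℝ :=
  u ⬝ᵥ (Jmat d).mulVec v

/-- A subspace of `ℝ^{2d}` is Lagrangian if it has dimension `d` and `ω` vanishes on it. -/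
def IsLagrangian {d : ℕ} (L : Submodule ℝ (Fin d ⊕ Fin d → ℝ)) : Prop :=
  Module.finrank ℝ L = d ∧ ∀ u ∈ L, ∀ v ∈ L, omegaForm u v = 0

/-- The standard basis vectors of `ℝ^{2d}`. -/
noncomputable def stdE (d : ℕ) (i : Fin d ⊕ Fin d) : Fin d ⊕ Fin d → ℝ :=
  Pi.single i 1

/-- The `ℓ²`-operator norm of a square real matrix. -/
noncomputable def opNorm {ι : Type} [Fintype ι] [DecidableEq ι] (M : Matrix ι ι ℝ) : ℝ :=
  ‖Matrix.toEuclideanCLM (𝕜 := ℝ) M‖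

/-!
Put the vectors `e i` as the columns of a `2d × d` matrix `E`. Isotropy of their span says
`Eᵀ J E = 0`, and near the standard frame the Gram matrix `G = Eᵀ E` is invertible. Then
`[E | J E G⁻¹]` is symplectic and sends `E_i` to `e i`: its second block spans the
Lagrangian complement `J L` of `L = span e`, normalised against `E` by `G⁻¹`. This completion
depends continuously on `E` and is the identity at the standard frame, so its inverse is the
required `A`.
-/

open Filter Topology

section Completion

variable {l R : Type*} [Fintype l] [DecidableEq l] [CommRing R]

theorem inv_mem_symplecticGroup {M : Matrix (l ⊕ l) (l ⊕ l) R}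
    (hM : M ∈ symplecticGroup l R) : M⁻¹ ∈ symplecticGroup l R :=
  SymplecticGroup.coe_inv' ⟨M, hM⟩ ▸ (⟨M, hM⟩⁻¹ : symplecticGroup l R).2

theorem J_mul_J_mul {m : Type*} (X : Matrix (l ⊕ l) m R) : J l R * (J l R * X) = -X := by
  rw [← Matrix.mul_assoc, J_squared, Matrix.neg_mul, Matrix.one_mul]

noncomputable def symplecticCompletion (E : Matrix (l ⊕ l) l R) : Matrix (l ⊕ l) (l ⊕ l) R :=
  fromCols E (J l R * E * (Eᵀ * E)⁻¹)

theorem symplecticCompletion_mem_symplecticGroup {E : Matrix (l ⊕ l) l R}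
    (hE : Eᵀ * J l R * E = 0) (hG : IsUnit (Eᵀ * E).det) :
    symplecticCompletion E ∈ symplecticGroup l R := by
  have hGt : (Eᵀ * E)⁻¹ᵀ = (Eᵀ * E)⁻¹ := by
    rw [transpose_nonsing_inv, transpose_mul, transpose_transpose]
  have hE' (X : Matrix l l R) : Eᵀ * (J l R * (E * X)) = 0 := by
    rw [← Matrix.mul_assoc, ← Matrix.mul_assoc, hE, Matrix.zero_mul]
  rw [SymplecticGroup.mem_iff', symplecticCompletion, transpose_fromCols, fromRows_mul,
    fromRows_mul_fromCols]
  simp only [transpose_mul, hGt, Matrix.mul_assoc, J_transpose, J_mul_J_mul, hE',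
    Matrix.neg_mul, Matrix.mul_neg, neg_neg, Matrix.mul_zero, neg_zero]
  conv_rhs => rw [J]
  rw [fromBlocks_inj]
  refine ⟨?_, ?_, ?_, rfl⟩
  · simpa [Matrix.mul_assoc] using hE
  · rw [← Matrix.mul_assoc, mul_nonsing_inv _ hG]
  · rw [nonsing_inv_mul _ hG]

theorem symplecticCompletion_mulVec_single_inl (E : Matrix (l ⊕ l) l R) (i : l) :
    symplecticCompletion E *ᵥ Pi.single (Sum.inl i) 1 = fun k => E k i := by
  ext k
  simp [symplecticCompletion, mulVec_single]

theorem fromRows_one_zero_transpose_mul_self :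
    (fromRows 1 0 : Matrix (l ⊕ l) l R)ᵀ * (fromRows 1 0 : Matrix (l ⊕ l) l R) = 1 := by
  simp [transpose_fromRows, fromCols_mul_fromRows]

theorem symplecticCompletion_fromRows_one_zero :
    symplecticCompletion (fromRows (1 : Matrix l l R) 0) = 1 := by
  rw [symplecticCompletion, fromRows_one_zero_transpose_mul_self, J, fromBlocks_mul_fromRows]
  simp [fromCols_fromRows_eq_fromBlocks]

end Completion

theorem ContinuousAt.matrix_fromCols {X m n₁ n₂ R : Type*} [TopologicalSpace X]
    [TopologicalSpace R] {A : X → Matrix m n₁ R} {B : X → Matrix m n₂ R} {x : X}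
    (hA : ContinuousAt A x) (hB : ContinuousAt B x) :
    ContinuousAt (fun y => fromCols (A y) (B y)) x := by
  refine continuousAt_pi.2 fun i => continuousAt_pi.2 fun j => ?_
  cases j with
  | inl j => exact continuousAt_pi.1 (continuousAt_pi.1 hA i) j
  | inr j => exact continuousAt_pi.1 (continuousAt_pi.1 hB i) j

theorem continuousAt_symplecticCompletion {l 𝕜 : Type*} [Fintype l] [DecidableEq l]
    [NormedField 𝕜] [CompleteSpace 𝕜] {E : Matrix (l ⊕ l) l 𝕜} (hG : IsUnit (Eᵀ * E).det) :
    ContinuousAt symplecticCompletion E := by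
  have hGram : Continuous fun F : Matrix (l ⊕ l) l 𝕜 => Fᵀ * F :=
    continuous_id.matrix_transpose.matrix_mul continuous_id
  have hinv : ContinuousAt (fun F : Matrix (l ⊕ l) l 𝕜 => (Fᵀ * F)⁻¹) E :=
    (continuousAt_matrix_inv _ (NormedRing.inverse_continuousAt hG.unit)).comp
      (f := fun F => Fᵀ * F) hGram.continuousAt
  have hmul : Continuous fun p : Matrix (l ⊕ l) l 𝕜 × Matrix l l 𝕜 => J l 𝕜 * p.1 * p.2 :=
    (continuous_const.matrix_mul continuous_fst).matrix_mul continuous_snd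
  have hsecond : ContinuousAt (fun F : Matrix (l ⊕ l) l 𝕜 => J l 𝕜 * F * (Fᵀ * F)⁻¹) E :=
    hmul.continuousAt.comp (f := fun F => (F, (Fᵀ * F)⁻¹)) (continuousAt_id.prodMk hinv)
  exact continuousAt_id.matrix_fromCols hsecond

theorem continuous_opNorm {ι : Type} [Fintype ι] [DecidableEq ι] :
    Continuous (opNorm : Matrix ι ι ℝ → ℝ) :=
  continuous_norm.comp (LinearMap.continuous_of_finiteDimensional
    (toEuclideanCLM (𝕜 := ℝ) (n := ι)).toAlgEquiv.toLinearMap)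

theorem eventually_isUnit_gram_and_opNorm_symplecticCompletion_inv_sub_one_lt
    {l : Type} [Fintype l] [DecidableEq l] {ε : ℝ} (hε : 0 < ε) :
    ∀ᶠ E in 𝓝 (fromRows (1 : Matrix l l ℝ) 0),
      IsUnit (Eᵀ * E).det ∧ opNorm ((symplecticCompletion E)⁻¹ - 1) < ε := by
  have hGram : ContinuousAt (fun E : Matrix (l ⊕ l) l ℝ => (Eᵀ * E).det) (fromRows 1 0) :=
    (continuous_id.matrix_transpose.matrix_mul continuous_id).matrix_det.continuousAt
  have hG₀ :
      ((fromRows 1 0 : Matrix (l ⊕ l) l ℝ)ᵀ * (fromRows 1 0 : Matrix (l ⊕ l) l ℝ)).det = 1 := by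
    rw [fromRows_one_zero_transpose_mul_self, det_one]
  have hinv : ContinuousAt Inv.inv (1 : Matrix (l ⊕ l) (l ⊕ l) ℝ) := by
    refine continuousAt_matrix_inv _ ?_
    rw [det_one]
    exact NormedRing.inverse_continuousAt (1 : ℝˣ)
  have hA : ContinuousAt (fun E : Matrix (l ⊕ l) l ℝ => opNorm ((symplecticCompletion E)⁻¹ - 1))
      (fromRows 1 0) := by
    refine continuous_opNorm.continuousAt.comp ((ContinuousAt.comp ?_ ?_).sub continuousAt_const)
    · rwa [symplecticCompletion_fromRows_one_zero]
    · exact continuousAt_symplecticCompletion (by rw [hG₀]; exact isUnit_one)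
  refine (hGram.eventually_ne (by rw [hG₀]; exact one_ne_zero)).mono (fun E hE => ?_) |>.and
    (hA.eventually_lt continuousAt_const ?_)
  · exact isUnit_iff_ne_zero.2 hE
  · simpa [symplecticCompletion_fromRows_one_zero, opNorm] using hε

section Standard

variable {d : ℕ}

theorem Jmat_eq_neg_J : Jmat d = -J (Fin d) ℝ := by
  simp [Jmat, J, fromBlocks_neg]

theorem isSymplectic_iff_mem_symplecticGroup {M : Matrix (Fin d ⊕ Fin d) (Fin d ⊕ Fin d) ℝ} :
    IsSymplectic M ↔ M ∈ symplecticGroup (Fin d) ℝ := by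
  rw [SymplecticGroup.mem_iff', IsSymplectic, Jmat_eq_neg_J, Matrix.mul_neg, Matrix.neg_mul,
    neg_inj]

theorem omegaForm_eq_neg_mul_apply (e : Fin d → Fin d ⊕ Fin d → ℝ) (i j : Fin d) :
    omegaForm (e i) (e j) = -(of e * J (Fin d) ℝ * (of e)ᵀ) i j := by
  rw [omegaForm, Jmat_eq_neg_J, neg_mulVec, dotProduct_neg, dotProduct_mulVec]
  rfl

theorem transpose_mul_J_mul_eq_zero_of_isLagrangian {e : Fin d → Fin d ⊕ Fin d → ℝ}
    (hL : IsLagrangian (Submodule.span ℝ (Set.range e))) :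
    ((of e)ᵀ)ᵀ * J (Fin d) ℝ * (of e)ᵀ = 0 := by
  ext i j
  rw [transpose_transpose, Matrix.zero_apply, ← neg_eq_zero, ← omegaForm_eq_neg_mul_apply]
  exact hL.2 _ (Submodule.subset_span ⟨i, rfl⟩) _ (Submodule.subset_span ⟨j, rfl⟩)

theorem transpose_of_stdE : (of fun i => stdE d (Sum.inl i))ᵀ = fromRows 1 0 := by
  ext (k | k) i <;> simp [stdE, Pi.single_apply, one_apply, eq_comm]

end Standard

/-- For any `ε > 0` there is `δ > 0` such that any family `(e_1,…,e_d)` of vectors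
`δ`-close to the first `d` standard basis vectors and spanning a Lagrangian subspace
can be sent to the standard basis vectors by a symplectic matrix `ε`-close to the identity. -/
theorem stmt2 {d : ℕ} :
    ∀ ε > (0 : ℝ), ∃ δ > (0 : ℝ),
      ∀ e : Fin d → (Fin d ⊕ Fin d → ℝ),
        (∀ i : Fin d, ‖e i - stdE d (Sum.inl i)‖ < δ) →
        IsLagrangian (Submodule.span ℝ (Set.range e)) →
        ∃ A : Matrix (Fin d ⊕ Fin d) (Fin d ⊕ Fin d) ℝ,
          IsSymplectic A ∧ opNorm (A - 1) < ε ∧ ∀ i : Fin d, A.mulVec (e i) = stdE d (Sum.inl i) := by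
  intro ε hε
  have hframe : Tendsto (fun e : Fin d → Fin d ⊕ Fin d → ℝ => (of e)ᵀ)
      (𝓝 fun i => stdE d (Sum.inl i)) (𝓝 (fromRows 1 0)) :=
    transpose_of_stdE (d := d) ▸ continuous_id.matrix_transpose.tendsto _
  obtain ⟨δ, hδ, hnear⟩ := Metric.eventually_nhds_iff.1 <| hframe.eventually <|
    eventually_isUnit_gram_and_opNorm_symplecticCompletion_inv_sub_one_lt hε
  refine ⟨δ, hδ, fun e he hLag => ?_⟩
  obtain ⟨hG, hA⟩ := hnear ((dist_pi_lt_iff hδ).2 fun i => (dist_eq_norm _ _).trans_lt (he i))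
  have hM := symplecticCompletion_mem_symplecticGroup
    (transpose_mul_J_mul_eq_zero_of_isLagrangian hLag) hG
  refine ⟨_, isSymplectic_iff_mem_symplecticGroup.2 (inv_mem_symplecticGroup hM), hA, fun i => ?_⟩
  have hMe : symplecticCompletion (of e)ᵀ *ᵥ stdE d (Sum.inl i) = e i :=
    symplecticCompletion_mulVec_single_inl _ i
  rw [← hMe, mulVec_mulVec, nonsing_inv_mul _ (SymplecticGroup.symplectic_det hM), one_mulVec]
end

section
/- Pliss-type combinatorial lemma: Let C > 1, let m₀, N₀ ≥ 1 with m₀ ≥ N₀, and let Ñ ≥ 2m₀²(log C + 2)/log(3/2). Suppose a₁,…,a_n are positive reals with each a_i ≤ C² and with product a₁⋯a_n > 1/2, where n ≥ Ñ. Then there exists an index i₀ with 1 ≤ i₀ ≤ n − m₀ such that a_{i₀}⋯a_{i₀+N₀−1} > 2/3 and a_{i₀}⋯a_{i₀+m₀−1} > 2/3. -/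
/-!
Walk greedily along the sequence, starting at position `1`. At a position `p` with room for a
window of length `m₀`, either both windows starting at `p` have product `> 2/3`, and `p` is the
required index, or one of them has product `≤ 2/3` and we jump over it. Each jump moves at most
`m₀` steps and multiplies the prefix product by at most `2/3`, so when the walk reaches the last
`m₀` positions after `t` jumps, the prefix product is at most `(2/3)^t` with `t + 1 ≥ n / m₀`,
while the remaining tail contributes at most `C^(2 m₀)`. For `n` as large as assumed this
forces the whole product below `1/2`.
-/

open Finset

theorem Ico_subset_Icc_one {p q n : ℕ} (hp : 1 ≤ p) (hq : q ≤ n + 1) : Ico p q ⊆ Icc 1 n :=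
  fun i hi => by simp only [mem_Ico, mem_Icc] at hi ⊢; omega

section Greedy

variable {r : ℝ} {m n : ℕ} {a : ℕ → ℝ}

theorem exists_prefix_prod_le_pow_from (hr : 0 ≤ r) (ha : ∀ i ∈ Icc 1 n, 0 ≤ a i)
    (hstep : ∀ p, 1 ≤ p → p + m ≤ n → ∃ j, 1 ≤ j ∧ j ≤ m ∧ ∏ i ∈ Ico p (p + j), a i ≤ r)
    (p t : ℕ) (hp : 1 ≤ p) (hpn : p ≤ n + 1) (hpt : p ≤ t * m + 1)
    (hprefix : ∏ i ∈ Ico 1 p, a i ≤ r ^ t) :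
    ∃ q s, 1 ≤ q ∧ n < q + m ∧ q ≤ n + 1 ∧ q ≤ s * m + 1 ∧ ∏ i ∈ Ico 1 q, a i ≤ r ^ s := by
  by_cases hroom : p + m ≤ n
  · obtain ⟨j, hj, hjm, hwindow⟩ := hstep p hp hroom
    have hwindow_nonneg : 0 ≤ ∏ i ∈ Ico p (p + j), a i :=
      prod_nonneg fun i hi => ha i (Ico_subset_Icc_one hp (by omega) hi)
    have hprefix' : ∏ i ∈ Ico 1 (p + j), a i ≤ r ^ (t + 1) := by
      rw [← prod_Ico_consecutive a hp (Nat.le_add_right p j), pow_succ]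
      exact mul_le_mul hprefix hwindow hwindow_nonneg (pow_nonneg hr t)
    exact exists_prefix_prod_le_pow_from hr ha hstep (p + j) (t + 1) (by omega) (by omega)
      (by rw [add_mul]; omega) hprefix'
  · exact ⟨p, t, hp, by omega, hpn, hpt, hprefix⟩
termination_by n + 1 - p

theorem exists_prefix_prod_le_pow (hr : 0 ≤ r) (ha : ∀ i ∈ Icc 1 n, 0 ≤ a i)
    (hstep : ∀ p, 1 ≤ p → p + m ≤ n → ∃ j, 1 ≤ j ∧ j ≤ m ∧ ∏ i ∈ Ico p (p + j), a i ≤ r) :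
    ∃ q s, 1 ≤ q ∧ n < q + m ∧ q ≤ n + 1 ∧ q ≤ s * m + 1 ∧ ∏ i ∈ Ico 1 q, a i ≤ r ^ s :=
  exists_prefix_prod_le_pow_from hr ha hstep 1 0 le_rfl (by omega) (by omega) (by simp)

end Greedy

theorem prod_Ico_le_pow {a : ℕ → ℝ} {B : ℝ} {p q : ℕ} (ha : ∀ i ∈ Ico p q, 0 ≤ a i ∧ a i ≤ B) :
    ∏ i ∈ Ico p q, a i ≤ B ^ (q - p) := by
  simpa only [prod_const, Nat.card_Ico] using
    prod_le_prod (fun i hi => (ha i hi).1) fun i hi => (ha i hi).2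

theorem prod_Icc_le_mul_pow {a : ℕ → ℝ} {B P : ℝ} {m n q : ℕ}
    (ha : ∀ i ∈ Icc 1 n, 0 ≤ a i) (haB : ∀ i ∈ Icc 1 n, a i ≤ B) (hB : 1 ≤ B)
    (hq : 1 ≤ q) (hqn : q ≤ n + 1) (htail : n < q + m) (hprefix : ∏ i ∈ Ico 1 q, a i ≤ P) :
    ∏ i ∈ Icc 1 n, a i ≤ P * B ^ m := by
  have hsub : Ico q (n + 1) ⊆ Icc 1 n := Ico_subset_Icc_one hq le_rfl
  have hprefix_nonneg : 0 ≤ ∏ i ∈ Ico 1 q, a i :=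
    prod_nonneg fun i hi => ha i (Ico_subset_Icc_one le_rfl hqn hi)
  have htail_nonneg : 0 ≤ ∏ i ∈ Ico q (n + 1), a i := prod_nonneg fun i hi => ha i (hsub hi)
  have htail_le : ∏ i ∈ Ico q (n + 1), a i ≤ B ^ m := calc
    _ ≤ B ^ (n + 1 - q) := prod_Ico_le_pow fun i hi => ⟨ha i (hsub hi), haB i (hsub hi)⟩
    _ ≤ B ^ m := pow_le_pow_right₀ hB (by omega)
  rw [← Ico_add_one_right_eq_Icc, ← prod_Ico_consecutive a hq hqn]
  exact mul_le_mul hprefix htail_le htail_nonneg (hprefix_nonneg.trans hprefix)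

theorem two_thirds_pow_mul_le_half {C : ℝ} (hC : 0 < C) {m n t : ℕ} (hm : 1 ≤ m)
    (hn : 2 * (m : ℝ) ^ 2 * (Real.log C + 2) / Real.log (3 / 2) ≤ n)
    (hnt : (n : ℝ) ≤ (t + 1) * m) :
    (2 / 3 : ℝ) ^ t * C ^ (2 * m) ≤ 1 / 2 := by
  set L := Real.log (3 / 2)
  have hL : 0 < L := Real.log_pos (by norm_num)
  have hL_le : L ≤ 1 / 2 := by
    linarith [Real.log_le_sub_one_of_pos (by norm_num : (0 : ℝ) < 3 / 2)]
  have hm' : (1 : ℝ) ≤ m := by exact_mod_cast hm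
  have ht : 2 * m * (Real.log C + 2) ≤ (t + 1) * L := by
    rw [div_le_iff₀ hL] at hn
    nlinarith
  have hlog : Real.log (2 * C ^ (2 * m)) ≤ Real.log ((3 / 2 : ℝ) ^ t) := by
    rw [Real.log_mul two_ne_zero (by positivity), Real.log_pow, Real.log_pow]
    push_cast
    nlinarith [Real.log_two_lt_d9]
  have hpow : 2 * C ^ (2 * m) ≤ (3 / 2 : ℝ) ^ t :=
    (Real.log_le_log_iff (by positivity) (by positivity)).mp hlog
  have hinv : (2 / 3 : ℝ) ^ t * (3 / 2) ^ t = 1 := by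
    rw [← mul_pow]; norm_num
  nlinarith [mul_le_mul_of_nonneg_left hpow (by positivity : (0 : ℝ) ≤ (2 / 3) ^ t)]

/-- Pliss-type combinatorial lemma: from a long product of uniformly bounded positive numbers
exceeding `1/2`, one finds a position where the partial products of lengths `N₀` and `m₀`
both exceed `2/3`. -/
theorem stmt11 (C : ℝ) (hC : 1 < C) (m0 N0 : ℕ) (hN0 : 1 ≤ N0) (hm : N0 ≤ m0)
    (n : ℕ) (hn : (n : ℝ) ≥ 2 * (m0 : ℝ) ^ 2 * (Real.log C + 2) / Real.log (3 / 2))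
    (a : ℕ → ℝ) (hpos : ∀ i ∈ Finset.Icc 1 n, 0 < a i)
    (hbd : ∀ i ∈ Finset.Icc 1 n, a i ≤ C ^ 2)
    (hprod : (1 : ℝ) / 2 < ∏ i ∈ Finset.Icc 1 n, a i) :
    ∃ i0 : ℕ, 1 ≤ i0 ∧ i0 ≤ n - m0 ∧
      (2 : ℝ) / 3 < ∏ i ∈ Finset.Ico i0 (i0 + N0), a i ∧
      (2 : ℝ) / 3 < ∏ i ∈ Finset.Ico i0 (i0 + m0), a i := by
  by_contra! hbad
  have hstep : ∀ p, 1 ≤ p → p + m0 ≤ n →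
      ∃ j, 1 ≤ j ∧ j ≤ m0 ∧ ∏ i ∈ Ico p (p + j), a i ≤ 2 / 3 := by
    intro p hp hpn
    by_cases hshort : 2 / 3 < ∏ i ∈ Ico p (p + N0), a i
    · exact ⟨m0, hN0.trans hm, le_rfl, hbad p hp (by omega) hshort⟩
    · exact ⟨N0, hN0, hm, not_lt.mp hshort⟩
  obtain ⟨q, t, hq1, hqn, hq, hqt, hprefix⟩ := exists_prefix_prod_le_pow (by norm_num)
    (fun i hi => (hpos i hi).le) hstep
  have hnt : n ≤ (t + 1) * m0 := by rw [add_one_mul]; omega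
  have hsmall := two_thirds_pow_mul_le_half (by linarith) (hN0.trans hm) hn (by exact_mod_cast hnt)
  have htotal := prod_Icc_le_mul_pow (fun i hi => (hpos i hi).le) hbd (one_le_pow₀ hC.le)
    hq1 hq hqn hprefix
  rw [← pow_mul] at htotal
  linarith
end
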